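/- Fix q ∈ ℂ with q ≠ 0 and q not a root of unity. Let (e₋₁, e₁, A) be a Podleś representation with parameter ∞ on a finite-dimensional complex vector space V, i.e. e₋₁∘e₁ = id − A², e₁∘e₋₁ = id − q⁴·A², e₁∘A = q²·A∘e₁, e₋₁∘A = q⁻²·A∘e₋₁. Then A is nilpotent. -/

import Mathlib

/-- A Podleś representation with parameter `∞` on a complex vector space:
endomorphisms `e₋₁, e₁, A` satisfying `e₋₁∘e₁ = id − A²`, `e₁∘e₋₁ = id − q⁴·A²`,
`e₁∘A = q²·A∘e₁` and `e₋₁∘A = q⁻²·A∘e₋₁`. -/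
def PodlesRepInf (q : ℂ) {V : Type*} [AddCommGroup V] [Module ℂ V]
    (em e1 A : Module.End ℂ V) : Prop :=
  em * e1 = 1 - A ^ 2 ∧
  e1 * em = 1 - q ^ 4 • A ^ 2 ∧
  e1 * A = q ^ 2 • (A * e1) ∧
  em * A = (q ^ 2)⁻¹ • (A * em)

/-!
If `A` is not nilpotent it has an eigenvalue `μ ≠ 0`. For an eigenvector `v` with eigenvalue `μ`,
`e₋₁ e₁ v = (1 - μ²) v`, so `e₁ v` is an eigenvector with eigenvalue `q⁻²μ` unless `μ² = 1`;
likewise `e₋₁ v` has eigenvalue `q²μ` unless `q⁴μ² = 1`. Since `A` has finitely many eigenvalues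
and `q` is not a root of unity, the descending chain `q⁻²ᵏμ` must reach some `ν` with `ν² = 1`,
and from there the ascending chain `q²ᵏν` never stops, producing infinitely many eigenvalues.
-/

open Module

theorem Set.infinite_of_forall_pow_mul_mem {K : Type*} [Field K] {S : Set K} {r c : K}
    (hr₀ : r ≠ 0) (hr : ∀ n : ℕ, 0 < n → r ^ n ≠ 1) (hc : c ≠ 0) (hS : ∀ k : ℕ, r ^ k * c ∈ S) :
    S.Infinite := by
  have hpow : Function.Injective fun n : ℕ => Units.mk0 r hr₀ ^ n := by
    refine injective_pow_iff_not_isOfFinOrder.2 fun hfin => ?_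
    obtain ⟨n, hn, hn1⟩ := isOfFinOrder_iff_pow_eq_one.1 hfin
    exact hr n hn (by simpa [Units.ext_iff] using hn1)
  refine Set.infinite_of_injective_forall_mem (fun i j hij => hpow ?_) hS
  simpa [Units.ext_iff] using mul_right_cancel₀ hc hij

namespace Module.End

theorem exists_hasEigenvalue_ne_zero {K V : Type*} [Field K] [IsAlgClosed K] [AddCommGroup V]
    [Module K V] [FiniteDimensional K V] {f : End K V} (hf : ¬IsNilpotent f) :
    ∃ μ ≠ 0, f.HasEigenvalue μ := by
  by_contra! h
  have hroots : (minpoly K f).roots = .replicate (minpoly K f).roots.card 0 :=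
    Multiset.eq_replicate_of_mem fun μ hμ =>
      not_not.1 fun hμ0 => h μ hμ0 (hasEigenvalue_of_isRoot (Polynomial.isRoot_of_mem_roots hμ))
  have hmin := (IsAlgClosed.splits (minpoly K f)).eq_prod_roots_of_monic
    (minpoly.monic (Algebra.IsIntegral.isIntegral f))
  rw [hroots, Multiset.map_replicate, Multiset.prod_replicate, map_zero, sub_zero] at hmin
  have hzero := minpoly.aeval K f
  rw [hmin, map_pow, Polynomial.aeval_X] at hzero
  exact hf ⟨_, hzero⟩

theorem HasEigenvalue.mul_of_ladder {K V : Type*} [Field K] [AddCommGroup V] [Module K V]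
    {a b f : End K V} {s t μ : K} (hab : a * b = 1 - t • f ^ 2) (hbf : b * f = s • (f * b))
    (hs : s ≠ 0) (hμ : f.HasEigenvalue μ) (ht : t * μ ^ 2 ≠ 1) :
    f.HasEigenvalue (s⁻¹ * μ) := by
  obtain ⟨v, hv, hv0⟩ := hμ.exists_hasEigenvector
  rw [mem_eigenspace_iff] at hv
  have hab_v : a (b v) = (1 - t * μ ^ 2) • v := by
    simpa [hv, pow_two, sub_smul, smul_smul] using congr($hab v)
  have hbv : b v ≠ 0 := fun h0 =>
    smul_ne_zero (sub_ne_zero.2 (Ne.symm ht)) hv0 (by rw [← hab_v, h0, map_zero])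
  have hfb_v : f (b v) = (s⁻¹ * μ) • b v := by
    have := congr($hbf v)
    simp only [mul_apply, hv, map_smul, LinearMap.smul_apply] at this
    rw [mul_smul, this, smul_smul, inv_mul_cancel₀ hs, one_smul]
  exact hasEigenvalue_of_hasEigenvector ⟨mem_eigenspace_iff.2 hfb_v, hbv⟩

end Module.End

namespace PodlesRepInf

variable {q : ℂ} {V : Type*} [AddCommGroup V] [Module ℂ V] {em e1 A : End ℂ V}

theorem hasEigenvalue_sq_mul (hrep : PodlesRepInf q em e1 A) (hq : q ≠ 0) {μ : ℂ}
    (hμ : A.HasEigenvalue μ) (hμq : q ^ 4 * μ ^ 2 ≠ 1) : A.HasEigenvalue (q ^ 2 * μ) := by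
  simpa only [inv_inv] using
    hμ.mul_of_ladder hrep.2.1 hrep.2.2.2 (inv_ne_zero (pow_ne_zero 2 hq)) hμq

theorem hasEigenvalue_inv_sq_mul (hrep : PodlesRepInf q em e1 A) (hq : q ≠ 0) {μ : ℂ}
    (hμ : A.HasEigenvalue μ) (hμ1 : μ ^ 2 ≠ 1) : A.HasEigenvalue ((q ^ 2)⁻¹ * μ) :=
  hμ.mul_of_ladder (by rw [one_smul]; exact hrep.1) hrep.2.2.1 (pow_ne_zero 2 hq)
    (by rwa [one_mul])

theorem hasEigenvalue_sq_pow_mul (hrep : PodlesRepInf q em e1 A) (hq : q ≠ 0)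
    (hq' : ∀ n : ℕ, 0 < n → q ^ n ≠ 1) {ν : ℂ} (hν : A.HasEigenvalue ν) (hν1 : ν ^ 2 = 1)
    (k : ℕ) : A.HasEigenvalue ((q ^ 2) ^ k * ν) := by
  induction k with
  | zero => simpa using hν
  | succ k ih =>
    have hne : q ^ 4 * ((q ^ 2) ^ k * ν) ^ 2 ≠ 1 := by
      rw [mul_pow, hν1, mul_one, ← pow_mul, ← pow_mul, ← pow_add]
      exact hq' _ (by omega)
    simpa [pow_succ', mul_assoc] using hrep.hasEigenvalue_sq_mul hq ih hne

theorem exists_hasEigenvalue_sq_eq_one [FiniteDimensional ℂ V] (hrep : PodlesRepInf q em e1 A)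
    (hq : q ≠ 0) (hq' : ∀ n : ℕ, 0 < n → q ^ n ≠ 1) {μ : ℂ} (hμ : A.HasEigenvalue μ)
    (hμ0 : μ ≠ 0) : ∃ ν, A.HasEigenvalue ν ∧ ν ^ 2 = 1 := by
  by_contra! h
  have hdown (k : ℕ) : A.HasEigenvalue ((q ^ 2)⁻¹ ^ k * μ) := by
    induction k with
    | zero => simpa using hμ
    | succ k ih => simpa [pow_succ', mul_assoc] using hrep.hasEigenvalue_inv_sq_mul hq ih (h _ ih)
  refine Set.infinite_of_forall_pow_mul_mem (inv_ne_zero (pow_ne_zero 2 hq)) (fun n hn => ?_) hμ0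
    hdown A.finite_hasEigenvalue
  rw [inv_pow, inv_ne_one, ← pow_mul]
  exact hq' _ (by omega)

end PodlesRepInf

/-- If `q` is nonzero and not a root of unity, then `A` is nilpotent in any finite-dimensional
Podleś representation with parameter `∞`. -/
theorem stmt3 {V : Type*} [AddCommGroup V] [Module ℂ V] [FiniteDimensional ℂ V]
    (q : ℂ) (hq : q ≠ 0) (hq' : ∀ n : ℕ, 0 < n → q ^ n ≠ 1)
    (em e1 A : Module.End ℂ V) (hrep : PodlesRepInf q em e1 A) :
    IsNilpotent A := by
  by_contra hnil
  obtain ⟨μ, hμ0, hμ⟩ := End.exists_hasEigenvalue_ne_zero hnil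
  obtain ⟨ν, hν, hν1⟩ := hrep.exists_hasEigenvalue_sq_eq_one hq hq' hμ hμ0
  refine Set.infinite_of_forall_pow_mul_mem (pow_ne_zero 2 hq) (fun n hn => ?_)
    (by rintro rfl; simp at hν1) (hrep.hasEigenvalue_sq_pow_mul hq hq' hν hν1)
    A.finite_hasEigenvalue
  rw [← pow_mul]
  exact hq' _ (by omega)
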